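/- arXiv:1309.4802 — 2 statements merged into one kernel-verified Lean document; each statement's English description precedes it below -/
import Mathlib

section
/- For each β ∈ {★31, 3★1, 31★}, under the bidirectional replacement 123 ↔ β all identity permutations of length at least 4 are equivalent to one another: id_m ≡ id_n for all m, n ≥ 4. -/
/-!
Pattern-replacement equivalences between permutations of different lengths
(arXiv:1309.4802). A ★-pattern is encoded as a `List (Option ℕ)`, where `none`
is the placeholder ★ and `some k` an integer entry.
-/

/-- A ★-pattern / star-string entry: `none` is ★, `some k` an integer `k`. -/
abbrev SPat := List (Option ℕ)

/-- The integer entries of a star-string, in order. -/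
def ints (ρ : SPat) : List ℕ := ρ.filterMap id

/-- Two lists of naturals are order-isomorphic. -/
def OrdIso (u v : List ℕ) : Prop :=
  u.length = v.length ∧
  ∀ i j, i < u.length → j < u.length → (u.getD i 0 < u.getD j 0 ↔ v.getD i 0 < v.getD j 0)

/-- A valid string of distinct positive integers and ★'s. -/
def StarStr (ρ : SPat) : Prop := (ints ρ).Nodup ∧ ∀ k ∈ ints ρ, 0 < k

/-- `r` (entry by entry) forms a copy of the ★-pattern `δ`: ★'s in the same
positions, and the integer entries order-isomorphic. -/
def IsCopy (r δ : SPat) : Prop :=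
  r.length = δ.length ∧
  (∀ i, (r.getD i none = none ↔ δ.getD i none = none)) ∧
  OrdIso (ints r) (ints δ)

/-- `Repl a b ρ₁ ρ₂` : `ρ₂` is obtained from `ρ₁` by replacing an occurrence of `a`
as a (not necessarily contiguous) substring of `ρ₁` by `b`, entry by entry at the
same positions. -/
inductive Repl : SPat → SPat → SPat → SPat → Prop
  | nil : Repl [] [] [] []
  | keep {a b ρ₁ ρ₂} (x : Option ℕ) : Repl a b ρ₁ ρ₂ → Repl a b (x :: ρ₁) (x :: ρ₂)
  | repl {a b ρ₁ ρ₂} (x y : Option ℕ) :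
      Repl a b ρ₁ ρ₂ → Repl (x :: a) (y :: b) (x :: ρ₁) (y :: ρ₂)

/-- `π` is a permutation of `1, …, n` (as a list). -/
def IsPermList (π : List ℕ) : Prop := π.Perm (List.range' 1 π.length)

/-- `σ` is a result of the replacement `α → β` applied to the permutation `π`:
(1) `ρ₁` is `π` renumbered (order-isomorphically) with ★'s inserted anywhere;
(2) a substring `a` of `ρ₁` forming a copy of `α` is replaced (in place) by a
string `b` that is a copy of `β`, whose integers meet `ρ₁` only inside `a`, and
which agrees with `a` on the integer entries common to `α` and `β`;
(3) dropping ★'s and renumbering gives the permutation `σ`. -/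
def IsResult (α β : SPat) (π σ : List ℕ) : Prop :=
  ∃ ρ₁ ρ₂ a b : SPat,
    StarStr ρ₁ ∧ OrdIso π (ints ρ₁) ∧
    IsCopy a α ∧
    StarStr b ∧ IsCopy b β ∧
    (∀ k ∈ ints b, k ∈ ints ρ₁ → k ∈ ints a) ∧
    (∀ i j x, α.getD i none = some x → β.getD j none = some x →
      a.getD i none = b.getD j none) ∧
    Repl a b ρ₁ ρ₂ ∧
    IsPermList σ ∧ OrdIso (ints ρ₂) σ

/-- Equivalence under the bidirectional replacement `α ↔ β`: a finite sequence
of `α → β` and `β → α` replacements. -/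
def PermEquiv (α β : SPat) (π σ : List ℕ) : Prop :=
  Relation.ReflTransGen (fun τ υ => IsResult α β τ υ ∨ IsResult β α τ υ) π σ

/-- `π` is isolated under `α ↔ β`: no other permutation is equivalent to it. -/
def Isolated (α β : SPat) (π : List ℕ) : Prop :=
  ∀ σ : List ℕ, IsPermList σ → PermEquiv α β π σ → σ = π

/-- The identity permutation `1 2 ⋯ n`. -/
def idPerm (n : ℕ) : List ℕ := List.range' 1 n

/-- The reverse identity permutation `n (n-1) ⋯ 1`. -/
def ridPerm (n : ℕ) : List ℕ := (List.range' 1 n).reverse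

def pat123 : SPat := [some 1, some 2, some 3]
def pat132 : SPat := [some 1, some 3, some 2]
def patS32 : SPat := [none, some 3, some 2]
def pat3S2 : SPat := [some 3, none, some 2]
def pat32S : SPat := [some 3, some 2, none]
def patS31 : SPat := [none, some 3, some 1]
def pat3S1 : SPat := [some 3, none, some 1]
def pat31S : SPat := [some 3, some 1, none]
def patS21 : SPat := [none, some 2, some 1]
def pat2S1 : SPat := [some 2, none, some 1]
def pat21S : SPat := [some 2, some 1, none]
def pat12S : SPat := [some 1, some 2, none]
def pat1S3 : SPat := [some 1, none, some 3]
def patS23 : SPat := [none, some 2, some 3]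
def patS12 : SPat := [none, some 1, some 2]
def pat23S : SPat := [some 2, some 3, none]
def pat13S : SPat := [some 1, some 3, none]
def pat1S2 : SPat := [some 1, none, some 2]

/-!
Appending a new maximum to the permutation and to every string involved turns a replacement
step into a replacement step: the new entry lies above everything and is never touched. Hence
`id_m ≡ id_n` implies `id_(m+k) ≡ id_(n+k)`, and it suffices to connect `id_4` and `id_5` in
both directions. For each `β` this is done by explicit three-step chains passing through a
permutation of length 3, e.g. `1234 → 321 → 2341 → 12345` and `12345 → 2134 → 132 → 1234`
for `β = ★31`.
-/

theorem getD_append_singleton (u : List ℕ) (c : ℕ) {i : ℕ} (hi : i < u.length + 1) :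
    (u ++ [c]).getD i 0 = if i < u.length then u.getD i 0 else c := by
  grind

theorem OrdIso.append_max {u v : List ℕ} {c d : ℕ} (h : OrdIso u v)
    (hc : ∀ x ∈ u, x < c) (hd : ∀ y ∈ v, y < d) : OrdIso (u ++ [c]) (v ++ [d]) := by
  obtain ⟨hlen, hiff⟩ := h
  have hu : ∀ i < u.length, u.getD i 0 < c := fun i hi => hc _ (by grind)
  have hv : ∀ i < u.length, v.getD i 0 < d := fun i hi => hd _ (by grind)
  refine ⟨by simp [hlen], fun i j hi hj => ?_⟩
  simp only [List.length_append, List.length_singleton] at hi hj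
  rw [getD_append_singleton u c hi, getD_append_singleton u c hj,
    getD_append_singleton v d (hlen ▸ hi), getD_append_singleton v d (hlen ▸ hj), ← hlen]
  split_ifs <;> grind

theorem ints_append_some (ρ : SPat) (M : ℕ) : ints (ρ ++ [some M]) = ints ρ ++ [M] := by
  simp [ints]

theorem StarStr.append_max {ρ : SPat} {M : ℕ} (h : StarStr ρ) (hM : ∀ x ∈ ints ρ, x < M)
    (hM₀ : 0 < M) : StarStr (ρ ++ [some M]) := by
  obtain ⟨hnd, hpos⟩ := h
  rw [StarStr, ints_append_some]
  refine ⟨hnd.append (List.nodup_singleton M) ?_, ?_⟩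
  · simp only [List.disjoint_singleton]
    exact fun hMρ => lt_irrefl M (hM M hMρ)
  · simp only [List.mem_append, List.mem_singleton]
    rintro k (hk | rfl)
    exacts [hpos k hk, hM₀]

theorem Repl.refl (ρ : SPat) : Repl [] [] ρ ρ := by
  induction ρ with
  | nil => exact .nil
  | cons x _ ih => exact .keep x ih

theorem Repl.append_right {a b ρ₁ ρ₂ : SPat} (h : Repl a b ρ₁ ρ₂) (ρ : SPat) :
    Repl a b (ρ₁ ++ ρ) (ρ₂ ++ ρ) := by
  induction h with
  | nil => exact .refl ρ
  | keep x _ ih => exact .keep x ih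
  | repl x y _ ih => exact .repl x y ih

theorem IsPermList.lt_length_add_one {π : List ℕ} (h : IsPermList π) :
    ∀ x ∈ π, x < π.length + 1 := fun x hx => by
  have := List.mem_range'_1.1 (h.mem_iff.1 hx)
  omega

theorem IsPermList.append_length_add_one {π : List ℕ} (h : IsPermList π) :
    IsPermList (π ++ [π.length + 1]) := by
  rw [IsPermList, List.length_append, List.length_singleton, List.range'_concat, Nat.one_mul,
    Nat.add_comm 1]
  exact h.append (.refl _)

theorem IsResult.isPermList {α β : SPat} {π σ : List ℕ} (h : IsResult α β π σ) :
    IsPermList σ := by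
  obtain ⟨-, -, -, -, -, -, -, -, -, -, -, -, hσ, -⟩ := h
  exact hσ

theorem IsResult.append_max {α β : SPat} {π σ : List ℕ} (h : IsResult α β π σ)
    (hπ : IsPermList π) : IsResult α β (π ++ [π.length + 1]) (σ ++ [σ.length + 1]) := by
  obtain ⟨ρ₁, ρ₂, a, b, hρ₁, hπρ₁, ha, hb, hbβ, hbρ₁, hfix, hrepl, hσ, hρ₂σ⟩ := h
  obtain ⟨M, hM₀, hM⟩ : ∃ M, 0 < M ∧ ∀ x ∈ ints ρ₁ ++ ints ρ₂ ++ ints b, x < M :=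
    ⟨_, Nat.succ_pos _, fun x hx => Nat.lt_succ_of_le (List.le_sum_of_mem hx)⟩
  refine ⟨ρ₁ ++ [some M], ρ₂ ++ [some M], a, b, hρ₁.append_max (fun x hx => hM x (by simp [hx]))
    hM₀, ?_, ha, hb, hbβ, ?_, hfix, hrepl.append_right _, hσ.append_length_add_one, ?_⟩
  · rw [ints_append_some]
    exact hπρ₁.append_max hπ.lt_length_add_one fun x hx => hM x (by simp [hx])
  · intro k hk hkρ₁
    rw [ints_append_some, List.mem_append, List.mem_singleton] at hkρ₁
    rcases hkρ₁ with hkρ₁ | rfl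
    · exact hbρ₁ k hk hkρ₁
    · exact absurd (hM _ (by simp [hk])) (lt_irrefl _)
  · rw [ints_append_some]
    exact hρ₂σ.append_max (fun x hx => hM x (by simp [hx])) hσ.lt_length_add_one

theorem PermEquiv.append_max {α β : SPat} {π σ : List ℕ} (h : PermEquiv α β π σ)
    (hπ : IsPermList π) : PermEquiv α β (π ++ [π.length + 1]) (σ ++ [σ.length + 1]) := by
  induction h using Relation.ReflTransGen.head_induction_on with
  | refl => exact .refl
  | head hstep _ ih =>
    rcases hstep with hs | hs
    · exact .head (.inl (hs.append_max hπ)) (ih hs.isPermList)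
    · exact .head (.inr (hs.append_max hπ)) (ih hs.isPermList)

theorem idPerm_isPermList (n : ℕ) : IsPermList (idPerm n) := by
  rw [IsPermList, idPerm, List.length_range']

theorem idPerm_append_max (n : ℕ) : idPerm n ++ [(idPerm n).length + 1] = idPerm (n + 1) := by
  simp only [idPerm, List.length_range', List.range'_concat, Nat.one_mul, Nat.add_comm 1]

theorem PermEquiv.idPerm_add {α β : SPat} {m n : ℕ} (h : PermEquiv α β (idPerm m) (idPerm n))
    (k : ℕ) : PermEquiv α β (idPerm (k + m)) (idPerm (k + n)) := by
  induction k with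
  | zero => simpa only [Nat.zero_add] using h
  | succ k ih =>
    have := ih.append_max (idPerm_isPermList _)
    rwa [idPerm_append_max, idPerm_append_max, Nat.add_right_comm k m,
      Nat.add_right_comm k n] at this

theorem permEquiv_idPerm_of_four_five {α β : SPat}
    (h₄₅ : PermEquiv α β (idPerm 4) (idPerm 5)) (h₅₄ : PermEquiv α β (idPerm 5) (idPerm 4))
    {m n : ℕ} (hm : 4 ≤ m) (hn : 4 ≤ n) : PermEquiv α β (idPerm m) (idPerm n) := by
  have from_four : ∀ k, PermEquiv α β (idPerm 4) (idPerm (k + 4)) := fun k => by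
    induction k with
    | zero => exact .refl
    | succ k ih => exact ih.trans (h₄₅.idPerm_add k)
  have to_four : ∀ k, PermEquiv α β (idPerm (k + 4)) (idPerm 4) := fun k => by
    induction k with
    | zero => exact .refl
    | succ k ih => exact (h₅₄.idPerm_add k).trans ih
  obtain ⟨i, rfl⟩ := Nat.exists_eq_add_of_le' hm
  obtain ⟨j, rfl⟩ := Nat.exists_eq_add_of_le' hn
  exact (to_four i).trans (from_four j)

instance (u v : List ℕ) : Decidable (OrdIso u v) :=
  decidable_of_iff (u.length = v.length ∧ ∀ i < u.length, ∀ j < u.length,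
      (u.getD i 0 < u.getD j 0 ↔ v.getD i 0 < v.getD j 0))
    (and_congr_right' ⟨fun h i j hi hj => h i hi j hj, fun h i hi j hj => h i j hi hj⟩)

instance (r δ : SPat) : Decidable (IsCopy r δ) :=
  decidable_of_iff (r.length = δ.length ∧
      (∀ i < r.length, (r.getD i none = none ↔ δ.getD i none = none)) ∧ OrdIso (ints r) (ints δ))
    ⟨fun ⟨hlen, hstar, hiso⟩ => ⟨hlen, fun i => (lt_or_ge i r.length).elim (hstar i) fun hi => by
        rw [List.getD_eq_default _ _ hi, List.getD_eq_default _ _ (hlen ▸ hi)], hiso⟩,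
      fun ⟨hlen, hstar, hiso⟩ => ⟨hlen, fun i _ => hstar i, hiso⟩⟩

instance (ρ : SPat) : Decidable (StarStr ρ) := by unfold StarStr; infer_instance

instance (π : List ℕ) : Decidable (IsPermList π) := by unfold IsPermList; infer_instance

theorem lt_length_of_getD_eq_some {r : SPat} {i x : ℕ} (h : r.getD i none = some x) :
    i < r.length := by
  by_contra! hle
  rw [List.getD_eq_default _ _ hle] at h
  cases h

-- `IsResult` with the quantifiers of its entry-matching condition bounded, so that `decide`
-- can check everything except the `Repl` shape.
theorem IsResult.of_witness {α β : SPat} {π σ : List ℕ} (ρ₁ ρ₂ a b : SPat) (hrepl : Repl a b ρ₁ ρ₂)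
    (h : StarStr ρ₁ ∧ OrdIso π (ints ρ₁) ∧ IsCopy a α ∧ StarStr b ∧ IsCopy b β ∧
      (∀ k ∈ ints b, k ∈ ints ρ₁ → k ∈ ints a) ∧
      (∀ i < α.length, ∀ j < β.length, (α.getD i none).isSome →
        α.getD i none = β.getD j none → a.getD i none = b.getD j none) ∧
      IsPermList σ ∧ OrdIso (ints ρ₂) σ) :
    IsResult α β π σ := by
  obtain ⟨hρ₁, hπρ₁, ha, hb, hbβ, hbρ₁, hfix, hσ, hρ₂σ⟩ := h
  refine ⟨ρ₁, ρ₂, a, b, hρ₁, hπρ₁, ha, hb, hbβ, hbρ₁, fun i j x hi hj => ?_, hrepl, hσ, hρ₂σ⟩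
  exact hfix i (lt_length_of_getD_eq_some hi) j (lt_length_of_getD_eq_some hj)
    (by rw [hi]; rfl) (hi.trans hj.symm)

-- Entries are renumbered in steps of 10 to leave room for the new entries of `b`.
theorem permEquiv_S31_four_five : PermEquiv pat123 patS31 (idPerm 4) (idPerm 5) := by
  have h₁ : IsResult pat123 patS31 [1, 2, 3, 4] [3, 2, 1] :=
    .of_witness
      [some 10, some 20, some 30, some 40]
      [none, some 40, some 30, some 10]
      [some 10, some 20, some 40] [none, some 40, some 10]
      (.repl _ _ <| .repl _ _ <| .keep _ <| .repl _ _ .nil) (by decide)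
  have h₂ : IsResult patS31 pat123 [3, 2, 1] [2, 3, 4, 1] :=
    .of_witness
      [none, some 30, some 20, some 10]
      [some 20, some 25, some 30, some 10]
      [none, some 30, some 20] [some 20, some 25, some 30]
      (.repl _ _ <| .repl _ _ <| .repl _ _ <| .keep _ .nil) (by decide)
  have h₃ : IsResult patS31 pat123 [2, 3, 4, 1] [1, 2, 3, 4, 5] :=
    .of_witness
      [none, some 20, some 30, some 40, some 10]
      [some 10, some 20, some 30, some 35, some 40]
      [none, some 40, some 10] [some 10, some 35, some 40]
      (.repl _ _ <| .keep _ <| .keep _ <| .repl _ _ <| .repl _ _ .nil) (by decide)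
  exact .head (.inl h₁) <| .head (.inr h₂) <| .single (.inr h₃)

theorem permEquiv_S31_five_four : PermEquiv pat123 patS31 (idPerm 5) (idPerm 4) := by
  have h₁ : IsResult pat123 patS31 [1, 2, 3, 4, 5] [2, 1, 3, 4] :=
    .of_witness
      [some 10, some 20, some 30, some 40, some 50]
      [none, some 30, some 10, some 40, some 50]
      [some 10, some 20, some 30] [none, some 30, some 10]
      (.repl _ _ <| .repl _ _ <| .repl _ _ <| .keep _ <| .keep _ .nil) (by decide)
  have h₂ : IsResult pat123 patS31 [2, 1, 3, 4] [1, 3, 2] :=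
    .of_witness
      [some 20, some 10, some 30, some 40]
      [none, some 10, some 40, some 20]
      [some 20, some 30, some 40] [none, some 40, some 20]
      (.repl _ _ <| .keep _ <| .repl _ _ <| .repl _ _ .nil) (by decide)
  have h₃ : IsResult patS31 pat123 [1, 3, 2] [1, 2, 3, 4] :=
    .of_witness
      [some 10, none, some 30, some 20]
      [some 10, some 20, some 25, some 30]
      [none, some 30, some 20] [some 20, some 25, some 30]
      (.keep _ <| .repl _ _ <| .repl _ _ <| .repl _ _ .nil) (by decide)
  exact .head (.inl h₁) <| .head (.inl h₂) <| .single (.inr h₃)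

theorem permEquiv_3S1_four_five : PermEquiv pat123 pat3S1 (idPerm 4) (idPerm 5) := by
  have h₁ : IsResult pat123 pat3S1 [1, 2, 3, 4] [3, 2, 1] :=
    .of_witness
      [some 10, some 20, some 30, some 40]
      [some 40, none, some 30, some 10]
      [some 10, some 20, some 40] [some 40, none, some 10]
      (.repl _ _ <| .repl _ _ <| .keep _ <| .repl _ _ .nil) (by decide)
  have h₂ : IsResult pat3S1 pat123 [3, 2, 1] [1, 3, 2, 4] :=
    .of_witness
      [some 30, none, some 20, some 10]
      [some 10, some 25, some 20, some 30]
      [some 30, none, some 10] [some 10, some 25, some 30]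
      (.repl _ _ <| .repl _ _ <| .keep _ <| .repl _ _ .nil) (by decide)
  have h₃ : IsResult pat3S1 pat123 [1, 3, 2, 4] [1, 2, 3, 4, 5] :=
    .of_witness
      [some 10, some 30, none, some 20, some 40]
      [some 10, some 20, some 25, some 30, some 40]
      [some 30, none, some 20] [some 20, some 25, some 30]
      (.keep _ <| .repl _ _ <| .repl _ _ <| .repl _ _ <| .keep _ .nil) (by decide)
  exact .head (.inl h₁) <| .head (.inr h₂) <| .single (.inr h₃)

theorem permEquiv_3S1_five_four : PermEquiv pat123 pat3S1 (idPerm 5) (idPerm 4) := by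
  have h₁ : IsResult pat123 pat3S1 [1, 2, 3, 4, 5] [1, 3, 2, 4] :=
    .of_witness
      [some 10, some 20, some 30, some 40, some 50]
      [some 10, some 40, none, some 20, some 50]
      [some 20, some 30, some 40] [some 40, none, some 20]
      (.keep _ <| .repl _ _ <| .repl _ _ <| .repl _ _ <| .keep _ .nil) (by decide)
  have h₂ : IsResult pat123 pat3S1 [1, 3, 2, 4] [3, 2, 1] :=
    .of_witness
      [some 10, some 30, some 20, some 40]
      [some 40, none, some 20, some 10]
      [some 10, some 30, some 40] [some 40, none, some 10]
      (.repl _ _ <| .repl _ _ <| .keep _ <| .repl _ _ .nil) (by decide)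
  have h₃ : IsResult pat3S1 pat123 [3, 2, 1] [1, 2, 3, 4] :=
    .of_witness
      [some 30, none, some 20, some 10]
      [some 10, some 15, some 20, some 30]
      [some 30, none, some 10] [some 10, some 15, some 30]
      (.repl _ _ <| .repl _ _ <| .keep _ <| .repl _ _ .nil) (by decide)
  exact .head (.inl h₁) <| .head (.inl h₂) <| .single (.inr h₃)

theorem permEquiv_31S_four_five : PermEquiv pat123 pat31S (idPerm 4) (idPerm 5) := by
  have h₁ : IsResult pat123 pat31S [1, 2, 3, 4] [2, 1, 3] :=
    .of_witness
      [some 10, some 20, some 30, some 40]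
      [some 30, some 10, none, some 40]
      [some 10, some 20, some 30] [some 30, some 10, none]
      (.repl _ _ <| .repl _ _ <| .repl _ _ <| .keep _ .nil) (by decide)
  have h₂ : IsResult pat31S pat123 [2, 1, 3] [1, 2, 4, 3] :=
    .of_witness
      [some 20, some 10, some 30, none]
      [some 10, some 15, some 30, some 20]
      [some 20, some 10, none] [some 10, some 15, some 20]
      (.repl _ _ <| .repl _ _ <| .keep _ <| .repl _ _ .nil) (by decide)
  have h₃ : IsResult pat31S pat123 [1, 2, 4, 3] [1, 2, 3, 4, 5] :=
    .of_witness
      [some 10, some 20, some 40, some 30, none]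
      [some 10, some 20, some 30, some 35, some 40]
      [some 40, some 30, none] [some 30, some 35, some 40]
      (.keep _ <| .keep _ <| .repl _ _ <| .repl _ _ <| .repl _ _ .nil) (by decide)
  exact .head (.inl h₁) <| .head (.inr h₂) <| .single (.inr h₃)

theorem permEquiv_31S_five_four : PermEquiv pat123 pat31S (idPerm 5) (idPerm 4) := by
  have h₁ : IsResult pat123 pat31S [1, 2, 3, 4, 5] [2, 1, 3, 4] :=
    .of_witness
      [some 10, some 20, some 30, some 40, some 50]
      [some 30, some 10, none, some 40, some 50]
      [some 10, some 20, some 30] [some 30, some 10, none]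
      (.repl _ _ <| .repl _ _ <| .repl _ _ <| .keep _ <| .keep _ .nil) (by decide)
  have h₂ : IsResult pat123 pat31S [2, 1, 3, 4] [3, 1, 2] :=
    .of_witness
      [some 20, some 10, some 30, some 40]
      [some 40, some 10, some 20, none]
      [some 20, some 30, some 40] [some 40, some 20, none]
      (.repl _ _ <| .keep _ <| .repl _ _ <| .repl _ _ .nil) (by decide)
  have h₃ : IsResult pat31S pat123 [3, 1, 2] [1, 2, 3, 4] :=
    .of_witness
      [some 30, some 10, some 20, none]
      [some 10, some 15, some 20, some 30]
      [some 30, some 10, none] [some 10, some 15, some 30]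
      (.repl _ _ <| .repl _ _ <| .keep _ <| .repl _ _ .nil) (by decide)
  exact .head (.inl h₁) <| .head (.inl h₂) <| .single (.inr h₃)

/-- for `β ∈ {★31, 3★1, 31★}`, all identity permutations of length
at least 4 are equivalent under `123 ↔ β`. -/
theorem identities_equiv_31 :
    ∀ β ∈ ([patS31, pat3S1, pat31S] : List SPat),
    ∀ m n : ℕ, 4 ≤ m → 4 ≤ n → PermEquiv pat123 β (idPerm m) (idPerm n) := by
  intro β hβ m n hm hn
  simp only [List.mem_cons, List.not_mem_nil, or_false] at hβ
  rcases hβ with rfl | rfl | rfl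
  · exact permEquiv_idPerm_of_four_five permEquiv_S31_four_five permEquiv_S31_five_four hm hn
  · exact permEquiv_idPerm_of_four_five permEquiv_3S1_four_five permEquiv_3S1_five_four hm hn
  · exact permEquiv_idPerm_of_four_five permEquiv_31S_four_five permEquiv_31S_five_four hm hn
end

section
/- For γ ∈ {12★, 1★3}: if a permutation σ is the result of applying the replacement 123 → γ to a permutation π, then p_γ(π) = p_γ(σ). -/
/-- `l` contains a (not necessarily contiguous) copy of the pattern `123`. -/
def contains123 (l : List ℕ) : Prop :=
  ∃ i j k, i < j ∧ j < k ∧ k < l.length ∧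
    l.getD i 0 < l.getD j 0 ∧ l.getD j 0 < l.getD k 0

/-- All copies of `123` in `l` (as triples of 0-indexed positions), listed in
lexicographic order: first by position of the smallest element, then of the
middle element, then of the largest element. -/
def triples123 (l : List ℕ) : List (ℕ × ℕ × ℕ) :=
  (List.range l.length).flatMap fun i =>
    (List.range l.length).flatMap fun j =>
      (List.range l.length).filterMap fun k =>
        if i < j ∧ j < k ∧ l.getD i 0 < l.getD j 0 ∧ l.getD j 0 < l.getD k 0
        then some (i, j, k) else none

/-- The leftmost copy of `123` in `l`, if any. -/
def leftmost123 (l : List ℕ) : Option (ℕ × ℕ × ℕ) := (triples123 l).head?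

/-- Repeatedly (with fuel) erase, from the leftmost copy of `123`, the entry at
the position selected by `d`, until no copy of `123` remains. -/
def pIter (d : ℕ × ℕ × ℕ → ℕ) : ℕ → List ℕ → List ℕ
  | 0, l => l
  | n + 1, l =>
    match leftmost123 l with
    | none => l
    | some t => pIter d n (l.eraseIdx (d t))

/-- Renumber a list of distinct naturals, preserving relative order, into a
permutation of `1, …, n`. -/
def renumber (l : List ℕ) : List ℕ := l.map fun x => (l.filter fun y => y ≤ x).length

def pGamma (d : ℕ × ℕ × ℕ → ℕ) (l : List ℕ) : List ℕ := renumber (pIter d l.length l)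

/-- `p_γ` for `γ = 12★`: repeatedly delete the largest element of the leftmost
copy of `123`, then renumber. -/
def p12star (l : List ℕ) : List ℕ := pGamma (fun t => t.2.2) l

/-- `p_γ` for `γ = 1★3`: repeatedly delete the middle element of the leftmost
copy of `123`, then renumber. -/
def p1star3 (l : List ℕ) : List ℕ := pGamma (fun t => t.2.1) l

/-!
Let `d` pick the entry of a copy of `123` that `p_γ` erases (the top for `12★`, the middle
for `1★3`), and call erasing the picked entry of an *arbitrary* copy of `123` a step. Steps are
locally confluent: if two copies pick different positions `p ≠ q`, then after erasing `p` the
position `q` is still picked by some copy (an entry `p` of the second copy can be traded for an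
entry of the first one), so the two erasures can be done in either order. The greedy process is
a maximal sequence of steps, hence by Church–Rosser it computes the unique normal form, which a
single step does not change. After forgetting the ★'s, a replacement `123 → γ` is such a step on
the renumbered `π`, and `p_γ` only sees the relative order of the entries.
-/

namespace List

theorem eraseIdx_eraseIdx_of_lt {α : Type*} (l : List α) {p q : ℕ} (h : p < q) :
    (l.eraseIdx q).eraseIdx p = (l.eraseIdx p).eraseIdx (q - 1) := by
  induction l generalizing p q with
  | nil => simp
  | cons x t ih =>
    obtain ⟨q, rfl⟩ : ∃ q', q = q' + 1 := ⟨q - 1, by omega⟩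
    cases p with
    | zero => simp
    | succ p =>
      obtain ⟨q, rfl⟩ : ∃ q', q = q' + 1 := ⟨q - 1, by omega⟩
      simp [ih (Nat.lt_of_succ_lt_succ h)]

end List

/-- The position that an index `q ≠ p` of a list occupies after the entry at `p` is erased. -/
def idxAfterErase (p q : ℕ) : ℕ := if q < p then q else q - 1

lemma getD_eraseIdx_idxAfterErase {l : List ℕ} {p q : ℕ} (hq : q ≠ p) (hql : q < l.length) :
    (l.eraseIdx p).getD (idxAfterErase p q) 0 = l.getD q 0 := by
  unfold idxAfterErase
  split_ifs with h
  · rw [List.getD_eq_getElem _ _ (by rw [List.length_eraseIdx]; split_ifs <;> omega),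
      List.getElem_eraseIdx_of_lt _ h, List.getD_eq_getElem]
  · rw [List.getD_eq_getElem _ _ (by rw [List.length_eraseIdx]; split_ifs <;> omega),
      List.getElem_eraseIdx_of_ge _ (by omega), List.getD_eq_getElem _ _ (by omega)]
    congr 1; omega

lemma idxAfterErase_lt_idxAfterErase {p q r : ℕ} (hq : q ≠ p) (hr : r ≠ p) (h : q < r) :
    idxAfterErase p q < idxAfterErase p r := by
  unfold idxAfterErase; split_ifs <;> omega

def IsCopy123 (l : List ℕ) : ℕ × ℕ × ℕ → Prop
  | (i, j, k) => i < j ∧ j < k ∧ k < l.length ∧ l.getD i 0 < l.getD j 0 ∧ l.getD j 0 < l.getD k 0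

lemma mem_triples123 {l : List ℕ} {t : ℕ × ℕ × ℕ} : t ∈ triples123 l ↔ IsCopy123 l t := by
  obtain ⟨i, j, k⟩ := t
  simp only [triples123, List.mem_flatMap, List.mem_filterMap, List.mem_range, IsCopy123]
  constructor
  · rintro ⟨i', -, j', -, k', hk, h⟩
    split_ifs at h with hc
    cases h
    exact ⟨hc.1, hc.2.1, hk, hc.2.2⟩
  · rintro ⟨hij, hjk, hk, h⟩
    exact ⟨i, by omega, j, by omega, k, hk, by rw [if_pos ⟨hij, hjk, h⟩]⟩

lemma IsCopy123.of_leftmost123_eq_some {l : List ℕ} {t : ℕ × ℕ × ℕ}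
    (h : leftmost123 l = some t) : IsCopy123 l t :=
  mem_triples123.mp (List.mem_of_mem_head? h)

lemma not_isCopy123_of_leftmost123_eq_none {l : List ℕ} (h : leftmost123 l = none)
    (t : ℕ × ℕ × ℕ) : ¬ IsCopy123 l t := fun ht =>
  List.not_mem_nil (List.head?_eq_none_iff.mp h ▸ mem_triples123.mpr ht)

lemma IsCopy123.eraseIdx {l : List ℕ} {p i j k : ℕ} (h : IsCopy123 l (i, j, k))
    (hp : p < l.length) (hi : i ≠ p) (hj : j ≠ p) (hk : k ≠ p) :
    IsCopy123 (l.eraseIdx p) (idxAfterErase p i, idxAfterErase p j, idxAfterErase p k) := by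
  obtain ⟨hij, hjk, hkl, hlt, hlt'⟩ := h
  refine ⟨idxAfterErase_lt_idxAfterErase hi hj hij, idxAfterErase_lt_idxAfterErase hj hk hjk,
    ?_, ?_, ?_⟩
  · rw [List.length_eraseIdx_of_lt hp]; unfold idxAfterErase; split_ifs <;> omega
  · rwa [getD_eraseIdx_idxAfterErase hi (by omega), getD_eraseIdx_idxAfterErase hj (by omega)]
  · rwa [getD_eraseIdx_idxAfterErase hj (by omega), getD_eraseIdx_idxAfterErase hk hkl]

lemma eraseIdx_eraseIdx_idxAfterErase {α : Type*} (l : List α) {p q : ℕ} (h : p ≠ q) :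
    (l.eraseIdx p).eraseIdx (idxAfterErase p q) =
      (l.eraseIdx q).eraseIdx (idxAfterErase q p) := by
  unfold idxAfterErase
  rcases lt_or_gt_of_ne h with h | h
  · rw [if_neg (by omega), if_pos h, l.eraseIdx_eraseIdx_of_lt h]
  · rw [if_pos h, if_neg (by omega), l.eraseIdx_eraseIdx_of_lt h]

section Erasure

variable {d : ℕ × ℕ × ℕ → ℕ}

def Deletable (d : ℕ × ℕ × ℕ → ℕ) (l : List ℕ) (p : ℕ) : Prop :=
  ∃ t, IsCopy123 l t ∧ d t = p

def EraseStep (d : ℕ × ℕ × ℕ → ℕ) (l m : List ℕ) : Prop :=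
  ∃ p, Deletable d l p ∧ m = l.eraseIdx p

lemma eraseStep_diamond
    (hpersist : ∀ l p q, Deletable d l p → Deletable d l q → p ≠ q →
      Deletable d (l.eraseIdx p) (idxAfterErase p q))
    (l m₁ m₂ : List ℕ) (h₁ : EraseStep d l m₁) (h₂ : EraseStep d l m₂) :
    ∃ e, Relation.ReflGen (EraseStep d) m₁ e ∧ Relation.ReflTransGen (EraseStep d) m₂ e := by
  obtain ⟨p, hp, rfl⟩ := h₁
  obtain ⟨q, hq, rfl⟩ := h₂
  by_cases hpq : p = q
  · subst hpq
    exact ⟨_, .refl, .refl⟩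
  · exact ⟨_, .single ⟨_, hpersist l p q hp hq hpq, rfl⟩,
      .single ⟨_, hpersist l q p hq hp (Ne.symm hpq), eraseIdx_eraseIdx_idxAfterErase l hpq⟩⟩

lemma reflTransGen_eraseStep_pIter (n : ℕ) (l : List ℕ) :
    Relation.ReflTransGen (EraseStep d) l (pIter d n l) := by
  induction n generalizing l with
  | zero => exact .refl
  | succ n ih =>
    cases h : leftmost123 l with
    | none => simp only [pIter, h]; exact .refl
    | some t =>
      simp only [pIter, h]
      exact .head ⟨d t, ⟨t, .of_leftmost123_eq_some h, rfl⟩, rfl⟩ (ih _)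

lemma leftmost123_pIter_eq_none (hlen : ∀ l t, IsCopy123 l t → d t < l.length)
    {n : ℕ} {l : List ℕ} (hn : l.length ≤ n) : leftmost123 (pIter d n l) = none := by
  induction n generalizing l with
  | zero => rw [List.length_eq_zero_iff.mp (Nat.le_zero.mp hn)]; rfl
  | succ n ih =>
    cases h : leftmost123 l with
    | none => simp only [pIter, h]
    | some t =>
      simp only [pIter, h]
      apply ih
      rw [List.length_eraseIdx_of_lt (hlen l t (.of_leftmost123_eq_some h))]
      omega

lemma eq_of_reflTransGen_eraseStep {l m : List ℕ} (h : leftmost123 l = none)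
    (hlm : Relation.ReflTransGen (EraseStep d) l m) : m = l := by
  rcases hlm.cases_head with rfl | ⟨_, ⟨_, ⟨t, ht, -⟩, -⟩, -⟩
  · rfl
  · exact absurd ht (not_isCopy123_of_leftmost123_eq_none h t)

theorem pGamma_eq_of_eraseStep (hlen : ∀ l t, IsCopy123 l t → d t < l.length)
    (hpersist : ∀ l p q, Deletable d l p → Deletable d l q → p ≠ q →
      Deletable d (l.eraseIdx p) (idxAfterErase p q))
    {l m : List ℕ} (h : EraseStep d l m) : pGamma d l = pGamma d m := by
  obtain ⟨e, hle, hme⟩ := Relation.church_rosser (eraseStep_diamond hpersist)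
    (reflTransGen_eraseStep_pIter l.length l)
    (.head h (reflTransGen_eraseStep_pIter m.length m))
  have hl := eq_of_reflTransGen_eraseStep (leftmost123_pIter_eq_none hlen le_rfl) hle
  have hm := eq_of_reflTransGen_eraseStep (leftmost123_pIter_eq_none hlen le_rfl) hme
  rw [pGamma, pGamma, ← hl, hm]

end Erasure

/-- Of two copies `(i, j, k)` and `(i', j', k')` with `k ≠ k'`, the second one stays a copy with
top `k'` when an entry equal to `k` is traded for `i` or `j`. -/
lemma deletable_top_eraseIdx (l : List ℕ) (p q : ℕ) (hp : Deletable (·.2.2) l p)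
    (hq : Deletable (·.2.2) l q) (hpq : p ≠ q) :
    Deletable (·.2.2) (l.eraseIdx p) (idxAfterErase p q) := by
  obtain ⟨⟨i, j, k⟩, ⟨hij, hjk, hk, hlt, hlt'⟩, rfl⟩ := hp
  obtain ⟨⟨i', j', k'⟩, ⟨hij', hjk', hk', hlt₂, hlt₂'⟩, rfl⟩ := hq
  dsimp only at hpq ⊢
  suffices ∃ a b, IsCopy123 l (a, b, k') ∧ a ≠ k ∧ b ≠ k by
    obtain ⟨a, b, hc, ha, hb⟩ := this
    exact ⟨_, hc.eraseIdx hk ha hb (Ne.symm hpq), rfl⟩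
  by_cases hj' : j' = k
  · subst hj'
    exact ⟨i, j, ⟨hij, by omega, hk', hlt, hlt'.trans hlt₂'⟩, by omega, by omega⟩
  by_cases hi' : i' = k
  · subst hi'
    exact ⟨i, j', ⟨by omega, hjk', hk', (hlt.trans hlt').trans hlt₂, hlt₂'⟩, by omega, hj'⟩
  exact ⟨i', j', ⟨hij', hjk', hk', hlt₂, hlt₂'⟩, hi', hj'⟩

/-- Of two copies `(i, j, k)` and `(i', j', k')` with `j ≠ j'`, the second one stays a copy with
middle `j'` when an entry equal to `j` is traded for `i` or `k`. -/
lemma deletable_mid_eraseIdx (l : List ℕ) (p q : ℕ) (hp : Deletable (·.2.1) l p)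
    (hq : Deletable (·.2.1) l q) (hpq : p ≠ q) :
    Deletable (·.2.1) (l.eraseIdx p) (idxAfterErase p q) := by
  obtain ⟨⟨i, j, k⟩, ⟨hij, hjk, hk, hlt, hlt'⟩, rfl⟩ := hp
  obtain ⟨⟨i', j', k'⟩, ⟨hij', hjk', hk', hlt₂, hlt₂'⟩, rfl⟩ := hq
  dsimp only at hpq ⊢
  suffices ∃ a c, IsCopy123 l (a, j', c) ∧ a ≠ j ∧ c ≠ j by
    obtain ⟨a, c, hc, ha, hc'⟩ := this
    exact ⟨_, hc.eraseIdx (by omega) ha (Ne.symm hpq) hc', rfl⟩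
  by_cases hi' : i' = j
  · subst hi'
    exact ⟨i, k', ⟨by omega, hjk', hk', hlt.trans hlt₂, hlt₂'⟩, by omega, by omega⟩
  by_cases hk'' : k' = j
  · subst hk''
    exact ⟨i', k, ⟨hij', by omega, hk, hlt₂, hlt₂'.trans hlt'⟩, hi', by omega⟩
  exact ⟨i', k', ⟨hij', hjk', hk', hlt₂, hlt₂'⟩, hi', hk''⟩

lemma countP_eq_countP_range_getD (p : ℕ → Bool) (l : List ℕ) :
    l.countP p = (List.range l.length).countP fun j => p (l.getD j 0) := by
  induction l with
  | nil => simp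
  | cons a t ih =>
    rw [List.length_cons, List.range_succ_eq_map, List.countP_cons, List.countP_cons,
      List.countP_map, ih]
    simp [Function.comp_def]

lemma renumber_eq_of_ordIso {u v : List ℕ} (h : OrdIso u v) : renumber u = renumber v := by
  obtain ⟨hlen, hcmp⟩ := h
  refine List.ext_getElem (by simpa [renumber] using hlen) fun i hu hv => ?_
  simp only [renumber, List.length_map, List.getElem_map] at hu hv ⊢
  rw [← List.countP_eq_length_filter, ← List.countP_eq_length_filter,
    countP_eq_countP_range_getD _ u, countP_eq_countP_range_getD _ v,
    show List.range v.length = List.range u.length by rw [hlen]]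
  refine List.countP_congr fun j hj => ?_
  rw [List.mem_range] at hj
  simp only [decide_eq_true_eq, ← List.getD_eq_getElem _ 0, ← not_lt, hcmp i j hu hj]

lemma triples123_eq_of_ordIso {u v : List ℕ} (h : OrdIso u v) : triples123 u = triples123 v := by
  obtain ⟨hlen, hcmp⟩ := h
  unfold triples123
  rw [← hlen]
  refine List.flatMap_congr fun i hi => List.flatMap_congr fun j hj =>
    List.filterMap_congr fun k hk => ?_
  rw [List.mem_range] at hi hj hk
  simp only [hcmp i j hi hj, hcmp j k hj hk]

lemma OrdIso.eraseIdx {u v : List ℕ} (h : OrdIso u v) (p : ℕ) :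
    OrdIso (u.eraseIdx p) (v.eraseIdx p) := by
  obtain ⟨hlen, hcmp⟩ := h
  by_cases hp : p < u.length
  case neg =>
    rw [List.eraseIdx_of_length_le (by omega), List.eraseIdx_of_length_le (by omega)]
    exact ⟨hlen, hcmp⟩
  refine ⟨by simp [List.length_eraseIdx, hlen], fun i j hi hj => ?_⟩
  rw [List.length_eraseIdx_of_lt hp] at hi hj
  have key : ∀ w : List ℕ, w.length = u.length → ∀ r, r < u.length - 1 →
      (w.eraseIdx p).getD r 0 = w.getD (if r < p then r else r + 1) 0 := by
    intro w hw r hr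
    rw [List.getD_eq_getElem _ _ (by rw [List.length_eraseIdx_of_lt (by omega)]; omega),
      List.getElem_eraseIdx]
    split_ifs <;> rw [List.getD_eq_getElem]
  rw [key u rfl i hi, key u rfl j hj, key v hlen.symm i hi, key v hlen.symm j hj]
  exact hcmp _ _ (by split_ifs <;> omega) (by split_ifs <;> omega)

lemma OrdIso.pIter {u v : List ℕ} (d : ℕ × ℕ × ℕ → ℕ) (n : ℕ) (h : OrdIso u v) :
    OrdIso (pIter d n u) (pIter d n v) := by
  induction n generalizing u v with
  | zero => exact h
  | succ n ih =>
    have hleft : leftmost123 u = leftmost123 v := by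
      rw [leftmost123, leftmost123, triples123_eq_of_ordIso h]
    cases hu : leftmost123 u with
    | none => simp only [_root_.pIter, hu, ← hleft]; exact h
    | some t => simp only [_root_.pIter, hu, ← hleft]; exact ih (h.eraseIdx _)

lemma pGamma_eq_of_ordIso (d : ℕ × ℕ × ℕ → ℕ) {u v : List ℕ} (h : OrdIso u v) :
    pGamma d u = pGamma d v := by
  rw [pGamma, pGamma, h.1]
  exact renumber_eq_of_ordIso (h.pIter d v.length)

@[simp] lemma ints_nil : ints [] = [] := rfl
@[simp] lemma ints_cons_some (k : ℕ) (ρ : SPat) : ints (some k :: ρ) = k :: ints ρ := rfl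
@[simp] lemma ints_cons_none (ρ : SPat) : ints (none :: ρ) = ints ρ := rfl
@[simp] lemma ints_append (ρ ρ' : SPat) : ints (ρ ++ ρ') = ints ρ ++ ints ρ' :=
  List.filterMap_append

lemma Repl.eq_of_nil {ρ₁ ρ₂ : SPat} (h : Repl [] [] ρ₁ ρ₂) : ρ₁ = ρ₂ := by
  induction ρ₁ generalizing ρ₂ with
  | nil => cases h; rfl
  | cons x ρ ih => cases h with | keep _ h => rw [ih h]

lemma Repl.exists_eq_append_cons {x y : Option ℕ} {a b ρ₁ ρ₂ : SPat}
    (h : Repl (x :: a) (y :: b) ρ₁ ρ₂) :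
    ∃ A ρ₁' ρ₂', ρ₁ = A ++ x :: ρ₁' ∧ ρ₂ = A ++ y :: ρ₂' ∧ Repl a b ρ₁' ρ₂' := by
  generalize ha : x :: a = a' at h
  generalize hb : y :: b = b' at h
  induction h with
  | nil => cases ha
  | keep z _ ih =>
    obtain ⟨A, ρ₁', ρ₂', rfl, rfl, h⟩ := ih ha hb
    exact ⟨z :: A, ρ₁', ρ₂', rfl, rfl, h⟩
  | repl x' y' h =>
    cases ha
    cases hb
    exact ⟨[], _, _, rfl, rfl, h⟩

lemma Repl.exists_eq_three {x₁ x₂ x₃ y₁ y₂ y₃ : Option ℕ} {ρ₁ ρ₂ : SPat}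
    (h : Repl [x₁, x₂, x₃] [y₁, y₂, y₃] ρ₁ ρ₂) :
    ∃ A B C D : SPat, ρ₁ = A ++ x₁ :: (B ++ x₂ :: (C ++ x₃ :: D)) ∧
      ρ₂ = A ++ y₁ :: (B ++ y₂ :: (C ++ y₃ :: D)) := by
  obtain ⟨A, _, _, rfl, rfl, h₁⟩ := h.exists_eq_append_cons
  obtain ⟨B, _, _, rfl, rfl, h₂⟩ := h₁.exists_eq_append_cons
  obtain ⟨C, D, _, rfl, rfl, h₃⟩ := h₂.exists_eq_append_cons
  exact ⟨A, B, C, D, rfl, by rw [h₃.eq_of_nil]⟩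

lemma IsCopy.exists_eq_three {r : SPat} {δ₁ δ₂ δ₃ : Option ℕ} (h : IsCopy r [δ₁, δ₂, δ₃]) :
    ∃ o₁ o₂ o₃, r = [o₁, o₂, o₃] ∧ (o₁ = none ↔ δ₁ = none) ∧ (o₂ = none ↔ δ₂ = none) ∧
      (o₃ = none ↔ δ₃ = none) := by
  obtain ⟨hlen, hstar, -⟩ := h
  obtain ⟨o₁, o₂, o₃, rfl⟩ := List.length_eq_three.mp hlen
  exact ⟨o₁, o₂, o₃, rfl, hstar 0, hstar 1, hstar 2⟩

lemma IsCopy.exists_eq_pat123 {a : SPat} (h : IsCopy a pat123) :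
    ∃ x y z : ℕ, x < y ∧ y < z ∧ a = [some x, some y, some z] := by
  obtain ⟨o₁, o₂, o₃, rfl, h₁, h₂, h₃⟩ := h.exists_eq_three
  obtain ⟨x, rfl⟩ := Option.ne_none_iff_exists'.mp (mt h₁.mp (by simp))
  obtain ⟨y, rfl⟩ := Option.ne_none_iff_exists'.mp (mt h₂.mp (by simp))
  obtain ⟨z, rfl⟩ := Option.ne_none_iff_exists'.mp (mt h₃.mp (by simp))
  have hcmp := h.2.2.2
  simp only [ints_cons_some, ints_nil, pat123, List.length_cons] at hcmp
  exact ⟨x, y, z, (hcmp 0 1 (by omega) (by omega)).mpr (by decide),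
    (hcmp 1 2 (by omega) (by omega)).mpr (by decide), rfl⟩

section Steps

variable {α : Type*}

lemma getD_append_cons_length (P L : List α) (x d : α) : (P ++ x :: L).getD P.length d = x := by
  simp

lemma getD_append_cons_length_add (P L : List α) (x d : α) (m : ℕ) :
    (P ++ x :: L).getD (P.length + 1 + m) d = L.getD m d := by
  simp [List.getElem?_append_right, Nat.add_assoc, Nat.add_comm 1 m]

lemma eraseIdx_append_cons_length_add (P L : List α) (x : α) (m : ℕ) :
    (P ++ x :: L).eraseIdx (P.length + 1 + m) = P ++ x :: L.eraseIdx m := by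
  rw [List.eraseIdx_append_of_length_le (by omega), Nat.add_assoc, Nat.add_sub_cancel_left,
    Nat.add_comm, List.eraseIdx_cons_succ]

variable {x y z : ℕ} (P Q R S : List ℕ)

lemma isCopy123_append (hxy : x < y) (hyz : y < z) :
    IsCopy123 (P ++ x :: (Q ++ y :: (R ++ z :: S)))
      (P.length, P.length + 1 + Q.length, P.length + 1 + (Q.length + 1 + R.length)) := by
  refine ⟨by omega, by omega, by simp; omega, ?_, ?_⟩ <;>
    simpa only [getD_append_cons_length, getD_append_cons_length_add]

lemma eraseStep_top (hxy : x < y) (hyz : y < z) :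
    EraseStep (·.2.2) (P ++ x :: (Q ++ y :: (R ++ z :: S))) (P ++ x :: (Q ++ y :: (R ++ S))) := by
  refine ⟨_, ⟨_, isCopy123_append P Q R S hxy hyz, rfl⟩, ?_⟩
  dsimp only
  rw [eraseIdx_append_cons_length_add, eraseIdx_append_cons_length_add,
    List.eraseIdx_append_of_length_le le_rfl, Nat.sub_self, List.eraseIdx_cons_zero]

lemma eraseStep_mid (hxy : x < y) (hyz : y < z) :
    EraseStep (·.2.1) (P ++ x :: (Q ++ y :: (R ++ z :: S))) (P ++ x :: (Q ++ (R ++ z :: S))) := by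
  refine ⟨_, ⟨_, isCopy123_append P Q R S hxy hyz, rfl⟩, ?_⟩
  dsimp only
  rw [eraseIdx_append_cons_length_add, List.eraseIdx_append_of_length_le le_rfl, Nat.sub_self,
    List.eraseIdx_cons_zero]

end Steps

lemma p12star_eq_of_isResult {π σ : List ℕ} (h : IsResult pat123 pat12S π σ) :
    p12star π = p12star σ := by
  obtain ⟨ρ₁, ρ₂, a, b, -, hπ, ha, -, hb, -, hcommon, hrepl, -, hσ⟩ := h
  obtain ⟨x, y, z, hxy, hyz, rfl⟩ := ha.exists_eq_pat123
  obtain ⟨o₁, o₂, o₃, rfl, -, -, h₃⟩ := hb.exists_eq_three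
  obtain rfl : o₁ = some x := (hcommon 0 0 1 rfl rfl).symm
  obtain rfl : o₂ = some y := (hcommon 1 1 2 rfl rfl).symm
  obtain rfl : o₃ = none := h₃.mpr rfl
  obtain ⟨A, B, C, D, rfl, rfl⟩ := hrepl.exists_eq_three
  calc p12star π = pGamma (·.2.2) (ints (A ++ some x :: (B ++ some y :: (C ++ some z :: D)))) :=
        pGamma_eq_of_ordIso _ hπ
    _ = pGamma (·.2.2) (ints (A ++ some x :: (B ++ some y :: (C ++ none :: D)))) := by
      refine pGamma_eq_of_eraseStep (fun _ _ ht => ht.2.2.1) deletable_top_eraseIdx ?_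
      simpa using eraseStep_top (ints A) (ints B) (ints C) (ints D) hxy hyz
    _ = p12star σ := pGamma_eq_of_ordIso _ hσ

lemma p1star3_eq_of_isResult {π σ : List ℕ} (h : IsResult pat123 pat1S3 π σ) :
    p1star3 π = p1star3 σ := by
  obtain ⟨ρ₁, ρ₂, a, b, -, hπ, ha, -, hb, -, hcommon, hrepl, -, hσ⟩ := h
  obtain ⟨x, y, z, hxy, hyz, rfl⟩ := ha.exists_eq_pat123
  obtain ⟨o₁, o₂, o₃, rfl, -, h₂, -⟩ := hb.exists_eq_three
  obtain rfl : o₁ = some x := (hcommon 0 0 1 rfl rfl).symm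
  obtain rfl : o₂ = none := h₂.mpr rfl
  obtain rfl : o₃ = some z := (hcommon 2 2 3 rfl rfl).symm
  obtain ⟨A, B, C, D, rfl, rfl⟩ := hrepl.exists_eq_three
  calc p1star3 π = pGamma (·.2.1) (ints (A ++ some x :: (B ++ some y :: (C ++ some z :: D)))) :=
        pGamma_eq_of_ordIso _ hπ
    _ = pGamma (·.2.1) (ints (A ++ some x :: (B ++ none :: (C ++ some z :: D)))) := by
      refine pGamma_eq_of_eraseStep (fun _ _ ht => ht.2.1.trans ht.2.2.1)
        deletable_mid_eraseIdx ?_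
      simpa using eraseStep_mid (ints A) (ints B) (ints C) (ints D) hxy hyz
    _ = p1star3 σ := pGamma_eq_of_ordIso _ hσ

/-- for `γ ∈ {12★, 1★3}`, if `σ` is a result of the replacement
`123 → γ` on `π`, then `p_γ(π) = p_γ(σ)`. -/
theorem pGamma_singleStep :
    (∀ π σ : List ℕ, IsPermList π → IsResult pat123 pat12S π σ →
      p12star π = p12star σ) ∧
    (∀ π σ : List ℕ, IsPermList π → IsResult pat123 pat1S3 π σ →
      p1star3 π = p1star3 σ) :=
  ⟨fun _ _ _ => p12star_eq_of_isResult, fun _ _ _ => p1star3_eq_of_isResult⟩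
end
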